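/- If A is an n×n nonnegative matrix contractible on row k (row k has exactly two nonzero entries a_{ki} ≠ 0, a_{kj} ≠ 0 with i ≠ j), then the contraction A_{k:ij} = (A^T_{ij:k})^T satisfies per A = per A_{k:ij}. -/

import Mathlib

open Finset Nat Matrix

def lucas : ℕ → ℕ
  | 0 => 2
  | 1 => 1
  | n + 2 => lucas (n + 1) + lucas n

/-!
Expanding `per A` along row `k`, only the entries `a_{ki}` and `a_{kj}` survive:
`per A = a_{ki} · per A(k|i) + a_{kj} · per A(k|j)`. The contraction replaces column `i` by
`a_{kj} · (column i) + a_{ki} · (column j)` and deletes column `j` and row `k`; by linearity of the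
permanent in that column its permanent splits into `a_{kj} · per A(k|j)` and `a_{ki}` times the
permanent of `A(k|i)` with its columns reordered. By transposition it suffices to treat columns.
-/

namespace Matrix

theorem submatrix_updateRow_of_injective {α l m n o : Type*} [DecidableEq l] [DecidableEq m]
    (M : Matrix m n α) (w : n → α) {f : l → m} (hf : Function.Injective f) (c : o → n) (b : l) :
    (updateRow M (f b) w).submatrix f c = updateRow (M.submatrix f c) b (w ∘ c) := by
  ext r s
  by_cases hr : r = b
  · subst hr; simp
  · simp [updateRow_ne hr, updateRow_ne (hf.ne hr)]

variable {R : Type*} [CommSemiring R]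

section Linearity

variable {n : Type*} [Fintype n] [DecidableEq n]

theorem permanent_updateCol_add (M : Matrix n n R) (j : n) (u v : n → R) :
    permanent (updateCol M j (u + v)) =
      permanent (updateCol M j u) + permanent (updateCol M j v) := by
  simp only [permanent, ← Finset.mul_prod_erase _ _ (Finset.mem_univ j), updateCol_self,
    Pi.add_apply, add_mul, Finset.sum_add_distrib]
  congr 1 <;>
  · refine Finset.sum_congr rfl fun σ _ => congrArg _ <| Finset.prod_congr rfl fun r hr => ?_
    rw [updateCol_ne (Finset.ne_of_mem_erase hr), updateCol_ne (Finset.ne_of_mem_erase hr)]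

theorem permanent_updateRow_add (M : Matrix n n R) (j : n) (u v : n → R) :
    permanent (updateRow M j (u + v)) =
      permanent (updateRow M j u) + permanent (updateRow M j v) := by
  rw [← permanent_transpose, ← updateCol_transpose, permanent_updateCol_add,
    updateCol_transpose, updateCol_transpose, permanent_transpose, permanent_transpose]

theorem permanent_updateRow_smul_add_smul (M : Matrix n n R) (j : n) (a b : R)
    (u v : n → R) :
    permanent (updateRow M j (a • u + b • v)) =
      a * permanent (updateRow M j u) + b * permanent (updateRow M j v) := by
  rw [permanent_updateRow_add, permanent_updateRow_smul, permanent_updateRow_smul]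

end Linearity

theorem permanent_submatrix_eq_of_range_eq {m n o : Type*} [Fintype m] [DecidableEq m]
    (M : Matrix n o R) {f g : m → n} (hf : Function.Injective f) (hg : Function.Injective g)
    (hfg : Set.range f = Set.range g) (c : m → o) :
    permanent (M.submatrix f c) = permanent (M.submatrix g c) := by
  set π : Equiv.Perm m :=
    (Equiv.ofInjective f hf).trans ((Equiv.setCongr hfg).trans (Equiv.ofInjective g hg).symm)
  have hπ : ∀ b, g (π b) = f b := fun b =>
    congrArg Subtype.val <| (Equiv.ofInjective g hg).apply_symm_apply ⟨f b, hfg ▸ ⟨b, rfl⟩⟩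
  have : M.submatrix f c = (M.submatrix g c).submatrix π id := by
    ext a b; simp [hπ]
  rw [this, permanent_permute_cols]

theorem permanent_succ_column_zero {n : ℕ} (A : Matrix (Fin (n + 1)) (Fin (n + 1)) R) :
    permanent A = ∑ r : Fin (n + 1), A r 0 * permanent (A.submatrix r.succAbove Fin.succ) := by
  rw [permanent, Finset.univ_perm_fin_succ, ← Finset.univ_product_univ]
  simp only [Finset.sum_map, Equiv.toEmbedding_apply, Finset.sum_product]
  refine Finset.sum_congr rfl fun r _ => Fin.cases ?_ (fun r => ?_) r
  · simp only [permanent, Fin.prod_univ_succ, Finset.mul_sum,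
      Equiv.Perm.decomposeFin_symm_apply_zero, Equiv.Perm.decomposeFin_symm_apply_succ,
      Equiv.swap_self, Equiv.coe_refl, id_eq, Fin.succAbove_zero, submatrix_apply]
  · rw [← permanent_permute_cols r.cycleRange (A.submatrix (Fin.succ r).succAbove Fin.succ),
      permanent, Finset.mul_sum]
    refine Finset.sum_congr rfl fun σ _ => ?_
    rw [Fin.prod_univ_succ, Equiv.Perm.decomposeFin_symm_apply_zero]
    refine congrArg _ <| Finset.prod_congr rfl fun c _ => ?_
    simp [Equiv.Perm.decomposeFin_symm_apply_succ, Fin.succAbove_cycleRange]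

theorem permanent_succ_column {n : ℕ} (A : Matrix (Fin (n + 1)) (Fin (n + 1)) R)
    (c : Fin (n + 1)) :
    permanent A = ∑ r : Fin (n + 1), A r c * permanent (A.submatrix r.succAbove c.succAbove) := by
  rw [← permanent_permute_rows c.cycleRange⁻¹ A, permanent_succ_column_zero]
  refine Finset.sum_congr rfl fun r _ => ?_
  congr 1
  · rw [submatrix_apply, id_eq, Equiv.Perm.inv_def, Fin.cycleRange_symm_zero]
  · congr 1
    ext a b
    simp [Equiv.Perm.inv_def, Fin.cycleRange_symm_succ]

theorem permanent_eq_of_column_support_pair {n : ℕ} (A : Matrix (Fin (n + 1)) (Fin (n + 1)) R)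
    {k i j : Fin (n + 1)} (hij : i ≠ j) (hzero : ∀ l, l ≠ i → l ≠ j → A l k = 0) :
    permanent A = A i k * permanent (A.submatrix i.succAbove k.succAbove) +
      A j k * permanent (A.submatrix j.succAbove k.succAbove) := by
  rw [permanent_succ_column A k,
    ← Finset.sum_pair (f := fun r => A r k * permanent (A.submatrix r.succAbove k.succAbove)) hij]
  refine (Finset.sum_subset (Finset.subset_univ _) fun l _ hl => ?_).symm
  simp only [Finset.mem_insert, Finset.mem_singleton, not_or] at hl
  rw [hzero l hl.1 hl.2, zero_mul]

theorem permanent_columnContraction {n : ℕ} (A : Matrix (Fin (n + 1)) (Fin (n + 1)) R)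
    {k i j : Fin (n + 1)} (hij : i ≠ j) (hzero : ∀ l, l ≠ i → l ≠ j → A l k = 0) :
    permanent A = permanent
      ((updateRow A i (A j k • A i + A i k • A j)).submatrix j.succAbove k.succAbove) := by
  obtain ⟨b, rfl⟩ := Fin.exists_succAbove_eq hij
  have keep_row : updateRow (A.submatrix j.succAbove k.succAbove) b
      (A (j.succAbove b) ∘ k.succAbove) = A.submatrix j.succAbove k.succAbove :=
    updateRow_eq_self _ b
  have swap_rows : updateRow (A.submatrix j.succAbove k.succAbove) b (A j ∘ k.succAbove) =
      A.submatrix (Equiv.swap (j.succAbove b) j ∘ j.succAbove) k.succAbove := by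
    ext r s
    by_cases hr : r = b
    · subst hr; simp
    · simp [updateRow_ne hr, Equiv.swap_apply_of_ne_of_ne
        (Fin.succAbove_right_injective.ne hr) (Fin.succAbove_ne j r)]
  have swap_range : Set.range (Equiv.swap (j.succAbove b) j ∘ j.succAbove) =
      Set.range (j.succAbove b).succAbove := by
    rw [Set.range_comp, Fin.range_succAbove, Fin.range_succAbove,
      Set.image_compl_eq (Equiv.bijective _), Set.image_singleton, Equiv.swap_apply_right]
  rw [submatrix_updateRow_of_injective _ _ Fin.succAbove_right_injective,
    permanent_eq_of_column_support_pair A hij hzero, Pi.add_comp,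
    Pi.smul_comp, Pi.smul_comp, permanent_updateRow_smul_add_smul, keep_row,
    swap_rows, permanent_submatrix_eq_of_range_eq A
      ((Equiv.injective _).comp Fin.succAbove_right_injective) Fin.succAbove_right_injective
      swap_range]
  ring

end Matrix

theorem permanent_contraction_row_general (n : ℕ) (A : Matrix (Fin (n + 1)) (Fin (n + 1)) ℝ)
    (k i j : Fin (n + 1)) (hij : i ≠ j)
    (hzero : ∀ l, l ≠ i → l ≠ j → A k l = 0) :
    Matrix.permanent A =
      Matrix.permanent ((((Matrix.updateRow Aᵀ i (Aᵀ j k • Aᵀ i + Aᵀ i k • Aᵀ j)).submatrix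
        j.succAbove k.succAbove)ᵀ)) := by
  rw [permanent_transpose, ← permanent_columnContraction Aᵀ hij hzero, permanent_transpose]

theorem permanent_contraction_row (n : ℕ) (A : Matrix (Fin (n + 1)) (Fin (n + 1)) ℝ)
    (k i j : Fin (n + 1)) (hij : i ≠ j)
    (hnonneg : ∀ a b, 0 ≤ A a b)
    (hi : A k i ≠ 0) (hj : A k j ≠ 0)
    (hzero : ∀ l, l ≠ i → l ≠ j → A k l = 0) :
    Matrix.permanent A =
      Matrix.permanent ((((Matrix.updateRow Aᵀ i (Aᵀ j k • Aᵀ i + Aᵀ i k • Aᵀ j)).submatrix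
        j.succAbove k.succAbove)ᵀ)) :=
  permanent_contraction_row_general n A k i j hij hzero
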